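/- Let μ be a probability measure on [0,1]² with uniform marginals and joint distribution function C, and let (U₁,U₂) have law μ. Then for every integer ℓ ≥ 1, Cov(U₁, U₂^ℓ) = ℓ ∫₀¹∫₀¹ (C(u,v) − u v) v^{ℓ−1} dv du. -/

import Mathlib

/-!
Almost surely `U = (U₁, U₂)` lies in `[0,1]²`, so `C(u,v) = E[1{U₁ ≤ u} 1{U₂ ≤ v}]` there, and
Fubini turns `∫₀¹∫₀¹ C(u,v) g'(v) dv du` into `E[(1 - U₁)(g(1) - g(U₂))]`. The product copula `uv`
contributes `(g(1) - ∫₀¹ g) / 2` (integration by parts), and expanding the difference leaves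
exactly `E[U₁ g(U₂)] - E[U₁] E[g(U₂)]`. The theorem is the case `g(v) = v^ℓ`.
-/

open MeasureTheory Set

local notation "𝒰" => (volume.restrict (Icc (0:ℝ) 1) : Measure ℝ)

lemma setIntegral_Icc_eq_intervalIntegral {a b : ℝ} (hab : a ≤ b) (f : ℝ → ℝ) :
    ∫ x in Icc a b, f x = ∫ x in a..b, f x := by
  rw [integral_Icc_eq_integral_Ioc, intervalIntegral.integral_of_le hab]

lemma setIntegral_Icc_indicator_Ici {a b c : ℝ} (ha : a ∈ Icc b c) (f : ℝ → ℝ) :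
    ∫ x in Icc b c, (Ici a).indicator f x = ∫ x in a..c, f x := by
  have hset : Ici a ∩ Icc b c = Icc a c := by
    ext x
    simp only [mem_inter_iff, mem_Ici, mem_Icc]
    constructor
    · rintro ⟨hax, -, hxc⟩; exact ⟨hax, hxc⟩
    · rintro ⟨hax, hxc⟩; exact ⟨hax, ha.1.trans hax, hxc⟩
  rw [integral_indicator measurableSet_Ici, Measure.restrict_restrict measurableSet_Ici, hset,
    setIntegral_Icc_eq_intervalIntegral ha.2]

lemma intervalIntegral_intervalIntegral_eq_integral_prod {F : ℝ × ℝ → ℝ}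
    (hF : Integrable F (Measure.prod 𝒰 𝒰)) :
    ∫ u in (0:ℝ)..1, ∫ v in (0:ℝ)..1, F (u, v) = ∫ q, F q ∂(Measure.prod 𝒰 𝒰) := by
  simp only [integral_prod F hF, setIntegral_Icc_eq_intervalIntegral zero_le_one]

lemma Continuous.integrable_of_ae_mem_compact {X : Type*} [TopologicalSpace X] [T2Space X]
    [MeasurableSpace X] [OpensMeasurableSpace X] {μ : Measure X} [IsFiniteMeasure μ] {K : Set X}
    (hK : IsCompact K) (hμ : ∀ᵐ x ∂μ, x ∈ K) {φ : X → ℝ} (hφ : Continuous φ) : Integrable φ μ := by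
  rw [← Measure.restrict_eq_self_of_ae_mem hμ]
  exact hφ.continuousOn.integrableOn_compact hK

lemma integral_sub_mul_sub {α : Type*} [MeasurableSpace α] {μ : Measure α}
    [IsProbabilityMeasure μ] {X Y : α → ℝ} (a b : ℝ) (hX : Integrable X μ) (hY : Integrable Y μ)
    (hXY : Integrable (fun x => X x * Y x) μ) :
    ∫ x, (a - X x) * (b - Y x) ∂μ
      = a * b - a * ∫ x, Y x ∂μ - b * ∫ x, X x ∂μ + ∫ x, X x * Y x ∂μ := by
  have haY : Integrable (fun x => a * b - a * Y x) μ := (integrable_const _).sub (hY.const_mul a)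
  have haYbX : Integrable (fun x => a * b - a * Y x - b * X x) μ := haY.sub (hX.const_mul b)
  calc _ = ∫ x, (a * b - a * Y x - b * X x + X x * Y x) ∂μ := by
        congr 1 with x; ring
    _ = _ := by
        rw [integral_add haYbX hXY, integral_sub haY (hX.const_mul b),
          integral_sub (integrable_const _) (hY.const_mul a), integral_const, integral_const_mul,
          integral_const_mul]
        simp

section Marginal

variable {α : Type*} [MeasurableSpace α] {μ : Measure α} {f : α → ℝ}

lemma ae_mem_Icc_of_map_eq (hf : AEMeasurable f μ) (h : μ.map f = 𝒰) :
    ∀ᵐ p ∂μ, f p ∈ Icc (0:ℝ) 1 :=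
  ae_of_ae_map hf (h ▸ ae_restrict_mem measurableSet_Icc)

lemma integral_comp_of_map_eq (hf : AEMeasurable f μ) (h : μ.map f = 𝒰) {φ : ℝ → ℝ}
    (hφ : Continuous φ) : ∫ p, φ (f p) ∂μ = ∫ x in (0:ℝ)..1, φ x := by
  rw [← integral_map hf (h ▸ hφ.aestronglyMeasurable), h,
    setIntegral_Icc_eq_intervalIntegral zero_le_one]

end Marginal

noncomputable def copulaKernel (g' : ℝ → ℝ) (p q : ℝ × ℝ) : ℝ :=
  (Icc 0 q.1 ×ˢ Icc 0 q.2).indicator (fun _ => g' q.2) p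

section CopulaKernel

variable {g' : ℝ → ℝ}

lemma integrable_copulaKernel (μ : Measure (ℝ × ℝ)) [IsFiniteMeasure μ] (hg' : Continuous g') :
    Integrable (Function.uncurry (copulaKernel g')) (μ.prod (Measure.prod 𝒰 𝒰)) := by
  have hS : MeasurableSet {z : (ℝ × ℝ) × (ℝ × ℝ) | z.1 ∈ Icc 0 z.2.1 ×ˢ Icc 0 z.2.2} := by
    simp only [mem_prod, mem_Icc, ofPred_and]
    measurability
  exact ((hg'.integrableOn_Icc.comp_snd 𝒰).comp_snd μ).indicator hS

lemma integral_copulaKernel_left (μ : Measure (ℝ × ℝ)) (q : ℝ × ℝ) :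
    ∫ p, copulaKernel g' p q ∂μ = μ.real (Icc 0 q.1 ×ˢ Icc 0 q.2) * g' q.2 :=
  integral_indicator_const _ (measurableSet_Icc.prod measurableSet_Icc)

lemma integral_copulaKernel_right {g : ℝ → ℝ} (hg : ∀ x, HasDerivAt g (g' x) x)
    (hg' : Continuous g') {p : ℝ × ℝ} (hp : p ∈ Icc (0:ℝ) 1 ×ˢ Icc (0:ℝ) 1) :
    ∫ q, copulaKernel g' p q ∂(Measure.prod 𝒰 𝒰) = (1 - p.1) * (g 1 - g p.2) := by
  have hfactor : ∀ q : ℝ × ℝ,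
      copulaKernel g' p q = (Ici p.1).indicator 1 q.1 * (Ici p.2).indicator g' q.2 := by
    intro q
    by_cases h1 : p.1 ≤ q.1 <;> by_cases h2 : p.2 ≤ q.2 <;>
      simp [copulaKernel, indicator, h1, h2, hp.1.1, hp.2.1, -Icc_prod_Icc]
  simp_rw [hfactor]
  rw [integral_prod_mul, setIntegral_Icc_indicator_Ici hp.1, setIntegral_Icc_indicator_Ici hp.2,
    intervalIntegral.integral_eq_sub_of_hasDerivAt (fun x _ => hg x) (hg'.intervalIntegrable _ _)]
  simp

end CopulaKernel

section Fubini

variable {μ : Measure (ℝ × ℝ)} [IsFiniteMeasure μ] {g g' : ℝ → ℝ}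

lemma integrable_measureReal_Icc_prod_Icc_mul (hg' : Continuous g') :
    Integrable (fun q : ℝ × ℝ => μ.real (Icc 0 q.1 ×ˢ Icc 0 q.2) * g' q.2) (Measure.prod 𝒰 𝒰) := by
  simp_rw [← integral_copulaKernel_left μ]
  exact (integrable_copulaKernel μ hg').integral_prod_right

lemma integral_measureReal_Icc_prod_Icc_mul (hμ : ∀ᵐ p ∂μ, p ∈ Icc (0:ℝ) 1 ×ˢ Icc (0:ℝ) 1)
    (hg : ∀ x, HasDerivAt g (g' x) x) (hg' : Continuous g') :
    ∫ q, μ.real (Icc 0 q.1 ×ˢ Icc 0 q.2) * g' q.2 ∂(Measure.prod 𝒰 𝒰)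
      = ∫ p, (1 - p.1) * (g 1 - g p.2) ∂μ := by
  simp_rw [← integral_copulaKernel_left μ]
  rw [← integral_integral_swap (integrable_copulaKernel μ hg')]
  exact integral_congr_ae (hμ.mono fun p hp => integral_copulaKernel_right hg hg' hp)

lemma intervalIntegral_copula_sub_mul_deriv (hμ : ∀ᵐ p ∂μ, p ∈ Icc (0:ℝ) 1 ×ˢ Icc (0:ℝ) 1)
    (hg : ∀ x, HasDerivAt g (g' x) x) (hg' : Continuous g') :
    ∫ u in (0:ℝ)..1, ∫ v in (0:ℝ)..1, (μ.real (Icc 0 u ×ˢ Icc 0 v) - u * v) * g' v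
      = ∫ p, (1 - p.1) * (g 1 - g p.2) ∂μ - (g 1 - ∫ v in (0:ℝ)..1, g v) / 2 := by
  have hC := integrable_measureReal_Icc_prod_Icc_mul (μ := μ) hg'
  have hP : Integrable (fun q : ℝ × ℝ => q.1 * (q.2 * g' q.2)) (Measure.prod 𝒰 𝒰) :=
    Integrable.mul_prod (f := fun x => x) (μ := 𝒰) continuous_id.integrableOn_Icc
      (continuous_id.mul hg').integrableOn_Icc
  have hparts : ∫ v in (0:ℝ)..1, v * g' v = g 1 - ∫ v in (0:ℝ)..1, g v := by
    rw [intervalIntegral.integral_mul_deriv_eq_deriv_mul (u := fun x => x)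
      (fun x _ => hasDerivAt_id x) (fun x _ => hg x) intervalIntegrable_const
      (hg'.intervalIntegrable _ _)]
    simp
  calc _ = ∫ q, μ.real (Icc 0 q.1 ×ˢ Icc 0 q.2) * g' q.2 ∂(Measure.prod 𝒰 𝒰)
        - ∫ q : ℝ × ℝ, q.1 * (q.2 * g' q.2) ∂(Measure.prod 𝒰 𝒰) := by
        rw [← integral_sub hC hP, ← intervalIntegral_intervalIntegral_eq_integral_prod
          (F := fun q => μ.real (Icc 0 q.1 ×ˢ Icc 0 q.2) * g' q.2 - q.1 * (q.2 * g' q.2))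
          (hC.sub hP)]
        simp only [sub_mul, mul_assoc]
    _ = _ := by
        rw [integral_measureReal_Icc_prod_Icc_mul hμ hg hg',
          integral_prod_mul (fun u => u) (fun v => v * g' v),
          setIntegral_Icc_eq_intervalIntegral zero_le_one,
          setIntegral_Icc_eq_intervalIntegral zero_le_one, integral_id, hparts]
        ring

end Fubini

theorem cov_comp_copula_representation (μ : Measure (ℝ × ℝ)) [IsProbabilityMeasure μ]
    (h1 : μ.map Prod.fst = 𝒰) (h2 : μ.map Prod.snd = 𝒰)
    {g g' : ℝ → ℝ} (hg : ∀ x, HasDerivAt g (g' x) x) (hg' : Continuous g') :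
    (∫ p, p.1 * g p.2 ∂μ) - (∫ p, p.1 ∂μ) * (∫ p, g p.2 ∂μ)
      = ∫ u in (0:ℝ)..1, ∫ v in (0:ℝ)..1, (μ.real (Icc 0 u ×ˢ Icc 0 v) - u * v) * g' v := by
  have hsq : ∀ᵐ p ∂μ, p ∈ Icc (0:ℝ) 1 ×ˢ Icc (0:ℝ) 1 :=
    (ae_mem_Icc_of_map_eq measurable_fst.aemeasurable h1).and
      (ae_mem_Icc_of_map_eq measurable_snd.aemeasurable h2)
  have hintegrable {φ : ℝ × ℝ → ℝ} (hφ : Continuous φ) : Integrable φ μ :=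
    hφ.integrable_of_ae_mem_compact (isCompact_Icc.prod isCompact_Icc) hsq
  have hgc : Continuous g := continuous_iff_continuousAt.2 fun x => (hg x).continuousAt
  have hEX : ∫ p, p.1 ∂μ = 1 / 2 := by
    rw [integral_comp_of_map_eq measurable_fst.aemeasurable h1 (φ := fun x => x) continuous_id,
      integral_id]
    norm_num
  have hEgY : ∫ p, g p.2 ∂μ = ∫ x in (0:ℝ)..1, g x :=
    integral_comp_of_map_eq measurable_snd.aemeasurable h2 hgc
  rw [intervalIntegral_copula_sub_mul_deriv hsq hg hg',
    integral_sub_mul_sub 1 (g 1) (hintegrable (by fun_prop)) (hintegrable (by fun_prop))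
      (hintegrable (by fun_prop)),
    hEX, hEgY]
  ring

theorem cov_pow_copula_representation_general
    (μ : Measure (ℝ × ℝ)) [IsProbabilityMeasure μ]
    (h1 : μ.map Prod.fst = volume.restrict (Icc (0:ℝ) 1))
    (h2 : μ.map Prod.snd = volume.restrict (Icc (0:ℝ) 1))
    (C : ℝ → ℝ → ℝ)
    (hC : ∀ u v : ℝ, C u v = (μ (Icc 0 u ×ˢ Icc 0 v)).toReal)
    (l : ℕ) :
    (∫ p, p.1 * p.2 ^ l ∂μ) - (∫ p, p.1 ∂μ) * (∫ p, p.2 ^ l ∂μ)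
      = (l : ℝ) * ∫ u in (0:ℝ)..1, ∫ v in (0:ℝ)..1,
          (C u v - u * v) * v ^ (l - 1) := by
  simp only [hC, ← measureReal_def]
  rw [cov_comp_copula_representation μ h1 h2 (hasDerivAt_pow l) (by fun_prop),
    ← intervalIntegral.integral_const_mul]
  congr 1 with u
  rw [← intervalIntegral.integral_const_mul]
  congr 1 with v
  ring

/-- If `μ` is a probability measure on `[0,1]²` with uniform marginals, joint df
(copula) `C`, and `(U₁,U₂) ~ μ`, then for every integer `ℓ ≥ 1`,
`Cov(U₁, U₂^ℓ) = ℓ ∫₀¹∫₀¹ (C(u,v) − u v) v^{ℓ−1} dv du`. -/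
theorem cov_pow_copula_representation
    (μ : Measure (ℝ × ℝ)) [IsProbabilityMeasure μ]
    (h1 : μ.map Prod.fst = volume.restrict (Icc (0:ℝ) 1))
    (h2 : μ.map Prod.snd = volume.restrict (Icc (0:ℝ) 1))
    (C : ℝ → ℝ → ℝ)
    (hC : ∀ u v : ℝ, C u v = (μ (Icc 0 u ×ˢ Icc 0 v)).toReal)
    (l : ℕ) (hl : 1 ≤ l) :
    (∫ p, p.1 * p.2 ^ l ∂μ) - (∫ p, p.1 ∂μ) * (∫ p, p.2 ^ l ∂μ)
      = (l : ℝ) * ∫ u in (0:ℝ)..1, ∫ v in (0:ℝ)..1,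
          (C u v - u * v) * v ^ (l - 1) :=
  cov_pow_copula_representation_general μ h1 h2 C hC l
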